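/- arXiv:0911.4899 — 2 statements merged into one kernel-verified Lean document; each statement's English description precedes it below -/
import Mathlib

section
/- Let d ∈ ℝ^p, T = spt(β) for some β with |T| = s ≥ 1, let τ > 0, and let S₁ be T together with the s largest-magnitude coordinates of d outside T. If ‖d_{Tᶜ}‖₁ ≤ (1+2τ)‖d_T‖₁, then ‖d‖₂² ≤ ‖d_{S₁}‖₂² + (1+2τ)² ‖d_T‖₂². -/
/-! The tail of `d` beyond `S₁` is dominated coordinatewise by the average of `|d|` over the block
`S₁ \ T`, which gives the Candès–Tao bound `s ‖d_{S₁ᶜ}‖₂² ≤ ‖d_{Tᶜ}‖₁²`. The cone condition and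
Cauchy–Schwarz on `T` turn the right-hand side into `(1+2τ)² s ‖d_T‖₂²`. -/

open Finset

theorem card_mul_sum_sq_le_of_abs_le {ι : Type*} (f : ι → ℝ) (A B : Finset ι)
    (h : ∀ i ∈ A, ∀ j ∈ B, |f j| ≤ |f i|) :
    #A * ∑ j ∈ B, f j ^ 2 ≤ (∑ i ∈ A, |f i|) * ∑ j ∈ B, |f j| := by
  have hdom : ∀ j ∈ B, #A * |f j| ≤ ∑ i ∈ A, |f i| := fun j hj => by
    simpa using sum_le_sum fun i hi => h i hi j hj
  calc #A * ∑ j ∈ B, f j ^ 2 = ∑ j ∈ B, |f j| * (#A * |f j|) := by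
        rw [mul_sum]; exact sum_congr rfl fun j _ => by rw [← sq_abs]; ring
    _ ≤ ∑ j ∈ B, |f j| * ∑ i ∈ A, |f i| :=
        sum_le_sum fun j hj => mul_le_mul_of_nonneg_left (hdom j hj) (abs_nonneg _)
    _ = (∑ i ∈ A, |f i|) * ∑ j ∈ B, |f j| := by rw [← sum_mul, mul_comm]

theorem card_mul_sum_sq_compl_le_sq_sum_abs_compl {ι : Type*} [Fintype ι] [DecidableEq ι]
    (d : ι → ℝ) (T S₁ : Finset ι) (hTS : T ⊆ S₁)
    (hmax : ∀ i ∈ S₁ \ T, ∀ j ∉ S₁, |d j| ≤ |d i|) :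
    #(S₁ \ T) * ∑ j ∈ S₁ᶜ, d j ^ 2 ≤ (∑ i ∈ Tᶜ, |d i|) ^ 2 := by
  have hblock : ∑ i ∈ S₁ \ T, |d i| ≤ ∑ i ∈ Tᶜ, |d i| :=
    sum_le_sum_of_subset_of_nonneg (fun i hi => mem_compl.2 (mem_sdiff.1 hi).2)
      fun i _ _ => abs_nonneg _
  have htail : ∑ j ∈ S₁ᶜ, |d j| ≤ ∑ i ∈ Tᶜ, |d i| :=
    sum_le_sum_of_subset_of_nonneg (compl_subset_compl.2 hTS) fun i _ _ => abs_nonneg _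
  calc #(S₁ \ T) * ∑ j ∈ S₁ᶜ, d j ^ 2 ≤ (∑ i ∈ S₁ \ T, |d i|) * ∑ j ∈ S₁ᶜ, |d j| :=
        card_mul_sum_sq_le_of_abs_le d _ _ fun i hi j hj => hmax i hi j (mem_compl.1 hj)
    _ ≤ (∑ i ∈ Tᶜ, |d i|) ^ 2 := by
        rw [sq]; exact mul_le_mul hblock htail (sum_nonneg fun _ _ => abs_nonneg _)
          (sum_nonneg fun _ _ => abs_nonneg _)

theorem sq_sum_abs_le_card_mul_sum_sq {ι : Type*} (f : ι → ℝ) (T : Finset ι) :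
    (∑ i ∈ T, |f i|) ^ 2 ≤ #T * ∑ i ∈ T, f i ^ 2 := by
  simpa only [sq_abs] using sq_sum_le_card_mul_sum_sq (s := T) (f := fun i => |f i|)

theorem stmt8_general {p : ℕ} (d : Fin p → ℝ) (τ : ℝ)
    (T S₁ : Finset (Fin p)) (s : ℕ) (hs : 1 ≤ s)
    (hTcard : T.card = s)
    (hTS : T ⊆ S₁) (hcard : (S₁ \ T).card = s)
    (hmax : ∀ i ∈ S₁ \ T, ∀ j ∉ S₁, |d j| ≤ |d i|)
    (hcone : (∑ i ∈ Tᶜ, |d i|) ≤ (1 + 2 * τ) * ∑ i ∈ T, |d i|) :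
    (∑ i, d i ^ 2) ≤ (∑ i ∈ S₁, d i ^ 2) + (1 + 2 * τ) ^ 2 * ∑ i ∈ T, d i ^ 2 := by
  have hspos : (0 : ℝ) < s := by exact_mod_cast hs
  have htail : (s : ℝ) * ∑ j ∈ S₁ᶜ, d j ^ 2 ≤ s * ((1 + 2 * τ) ^ 2 * ∑ i ∈ T, d i ^ 2) :=
    calc (s : ℝ) * ∑ j ∈ S₁ᶜ, d j ^ 2 ≤ (∑ i ∈ Tᶜ, |d i|) ^ 2 := by
          simpa [hcard] using card_mul_sum_sq_compl_le_sq_sum_abs_compl d T S₁ hTS hmax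
      _ ≤ ((1 + 2 * τ) * ∑ i ∈ T, |d i|) ^ 2 :=
          pow_le_pow_left₀ (sum_nonneg fun _ _ => abs_nonneg _) hcone 2
      _ = (1 + 2 * τ) ^ 2 * (∑ i ∈ T, |d i|) ^ 2 := mul_pow _ _ _
      _ ≤ (1 + 2 * τ) ^ 2 * (s * ∑ i ∈ T, d i ^ 2) := by
          gcongr; simpa [hTcard] using sq_sum_abs_le_card_mul_sum_sq d T
      _ = s * ((1 + 2 * τ) ^ 2 * ∑ i ∈ T, d i ^ 2) := by ring
  rw [← sum_add_sum_compl S₁]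
  exact add_le_add_right (le_of_mul_le_mul_left htail hspos) _

/-- Combining the Candès–Tao inequality with the cone condition:
`‖d‖₂² ≤ ‖d_{S₁}‖₂² + (1+2τ)² ‖d_T‖₂²`. -/
theorem stmt8 {p : ℕ} (β d : Fin p → ℝ) (τ : ℝ) (hτ : 0 < τ)
    (T S₁ : Finset (Fin p)) (s : ℕ) (hs : 1 ≤ s)
    (hT : ∀ i, β i ≠ 0 ↔ i ∈ T) (hTcard : T.card = s)
    (hTS : T ⊆ S₁) (hcard : (S₁ \ T).card = s)
    (hmax : ∀ i ∈ S₁ \ T, ∀ j ∉ S₁, |d j| ≤ |d i|)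
    (hcone : (∑ i ∈ Tᶜ, |d i|) ≤ (1 + 2 * τ) * ∑ i ∈ T, |d i|) :
    (∑ i, d i ^ 2) ≤ (∑ i ∈ S₁, d i ^ 2) + (1 + 2 * τ) ^ 2 * ∑ i ∈ T, d i ^ 2 :=
  stmt8_general d τ T S₁ s hs hTcard hTS hcard hmax hcone
end

section
/- Proposition 2.1: Let n, p ∈ ℕ with n ≥ 1, let D ⊆ ℝ^p, β ∈ ℝ^p with S = spt(β), and constants c₁, c₂ > 0, q ∈ (0,1), c₀ > 0. Suppose: (H1) with probability at least 1 − c₀q, |⟨ε, φ(Xv) − φ(Xβ)⟩| ≤ c₁√n ‖v − β‖₁ for all v ∈ D; (H2) G(ψ(Xv) − ψ(Xβ)) ≥ c₂ n ‖v − β‖₂² for all v ∈ D. Let c_r = 2c₁√n and κ_r = 4c₁/c₂. If β̂ ∈ D almost surely satisfies G(ψ(Xβ̂) − ψ(Xβ)) ≤ 2|⟨ε, φ(Xβ̂) − φ(Xβ)⟩| − c_r(‖β̂‖₁ − ‖β‖₁), then P(‖β̂ − β‖₂ ≤ κ_r √(|S|/n)) ≥ 1 − c₀q. -/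
/-! On the event of (H1), chaining (H2), the basic inequality for `β̂` and (H1) gives
`c₂ n ‖β̂ - β‖₂² ≤ 2c₁√n (‖β̂ - β‖₁ - ‖β̂‖₁ + ‖β‖₁)`. Off the support `S` of `β` the bracket
vanishes coordinatewise, and on `S` it is at most `2 |β̂ᵢ - βᵢ|`, so by Cauchy–Schwarz it is at most
`2 √|S| ‖β̂ - β‖₂`. Dividing by `‖β̂ - β‖₂` gives the bound. -/

open MeasureTheory Finset

theorem le_div_of_mul_sq_le_mul {a b s : ℝ} (ha : 0 < a) (hb : 0 ≤ b) (hs : 0 ≤ s)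
    (h : a * s ^ 2 ≤ b * s) : s ≤ b / a := by
  rw [le_div_iff₀ ha]
  rcases hs.eq_or_lt with rfl | hs
  · simpa using hb
  · exact le_of_mul_le_mul_right (by linarith) hs

theorem Finset.sum_abs_le_sqrt_card_mul_sqrt_sum_sq {ι : Type*} (s : Finset ι) (x : ι → ℝ) :
    ∑ i ∈ s, |x i| ≤ √(#s : ℝ) * √(∑ i ∈ s, x i ^ 2) := by
  rw [← Real.sqrt_mul (by positivity), Real.le_sqrt (by positivity) (by positivity)]
  simpa only [sq_abs] using sq_sum_le_card_mul_sum_sq (s := s) (f := fun i => |x i|)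

section SparseRecovery

variable {ι : Type*} [Fintype ι]

theorem sum_abs_sub_le_of_support_subset (v β : ι → ℝ) {S : Finset ι}
    (hS : Function.support β ⊆ S) :
    ∑ i, |v i - β i| ≤ (∑ i, |v i| - ∑ i, |β i|) + 2 * ∑ i ∈ S, |v i - β i| := by
  have hout : ∑ i, (|v i - β i| - |v i| + |β i|) = ∑ i ∈ S, (|v i - β i| - |v i| + |β i|) := by
    refine (sum_subset (subset_univ S) fun i _ hi => ?_).symm
    simp [Function.notMem_support.mp (mt (@hS i) hi)]
  have hin : ∑ i ∈ S, (|v i - β i| - |v i| + |β i|) ≤ ∑ i ∈ S, 2 * |v i - β i| :=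
    sum_le_sum fun i _ => by
      linarith [abs_sub_abs_le_abs_sub (β i) (v i), abs_sub_comm (β i) (v i)]
  simp only [sum_add_distrib, sum_sub_distrib, ← mul_sum] at hout hin
  linarith

theorem sqrt_sum_sq_sub_le_of_support_subset {v β : ι → ℝ} {S : Finset ι}
    (hS : Function.support β ⊆ S) {a l : ℝ} (ha : 0 < a) (hl : 0 ≤ l)
    (h : a * ∑ i, (v i - β i) ^ 2 ≤ l * (∑ i, |v i - β i| - (∑ i, |v i| - ∑ i, |β i|))) :
    √(∑ i, (v i - β i) ^ 2) ≤ 2 * l / a * √(#S : ℝ) := by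
  set e := √(∑ i, (v i - β i) ^ 2)
  have hsq : ∑ i, (v i - β i) ^ 2 = e ^ 2 := (Real.sq_sqrt (by positivity)).symm
  have hcone := sum_abs_sub_le_of_support_subset v β hS
  have hcs : ∑ i ∈ S, |v i - β i| ≤ √(#S : ℝ) * e :=
    (S.sum_abs_le_sqrt_card_mul_sqrt_sum_sq _).trans <|
      mul_le_mul_of_nonneg_left (Real.sqrt_le_sqrt <| sum_le_sum_of_subset_of_nonneg
        (subset_univ S) fun i _ _ => sq_nonneg _) (Real.sqrt_nonneg _)
  rw [div_mul_eq_mul_div]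
  refine le_div_of_mul_sq_le_mul ha (mul_nonneg (mul_nonneg zero_le_two hl) (Real.sqrt_nonneg _))
    (Real.sqrt_nonneg _) ?_
  calc a * e ^ 2 ≤ l * (2 * ∑ i ∈ S, |v i - β i|) :=
        hsq ▸ h.trans (mul_le_mul_of_nonneg_left (by linarith) hl)
    _ ≤ l * (2 * (√(#S : ℝ) * e)) := by gcongr
    _ = 2 * l * √(#S : ℝ) * e := by ring

end SparseRecovery

theorem stmt9_general {Ω : Type*} [MeasurableSpace Ω] (ℙ : Measure Ω)
    {n p : ℕ} (hn : 1 ≤ n) (X : Matrix (Fin n) (Fin p) ℝ)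
    (D : Set (Fin p → ℝ)) (β : Fin p → ℝ)
    (G : (Fin n → ℝ) → ℝ) (ψ φ : Fin n → ℝ → ℝ)
    (ε : Ω → Fin n → ℝ) (βh : Ω → Fin p → ℝ)
    (c₁ c₂ q c₀ : ℝ) (hc₁ : 0 < c₁) (hc₂ : 0 < c₂)
    (hH1 : ENNReal.ofReal (1 - c₀ * q) ≤
      ℙ {ω | ∀ v ∈ D,
        |∑ k, ε ω k * (φ k (X.mulVec v k) - φ k (X.mulVec β k))| ≤
          c₁ * Real.sqrt n * ∑ i, |v i - β i|})
    (hH2 : ∀ v ∈ D, c₂ * n * (∑ i, (v i - β i) ^ 2) ≤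
      G (fun k => ψ k (X.mulVec v k) - ψ k (X.mulVec β k)))
    (hβh : ∀ᵐ ω ∂ℙ, βh ω ∈ D ∧
      G (fun k => ψ k (X.mulVec (βh ω) k) - ψ k (X.mulVec β k)) ≤
        2 * |∑ k, ε ω k * (φ k (X.mulVec (βh ω) k) - φ k (X.mulVec β k))|
          - (2 * c₁ * Real.sqrt n) * ((∑ i, |βh ω i|) - ∑ i, |β i|)) :
    ENNReal.ofReal (1 - c₀ * q) ≤
      ℙ {ω | Real.sqrt (∑ i, (βh ω i - β i) ^ 2) ≤
        (4 * c₁ / c₂) * Real.sqrt (({i | β i ≠ 0} : Set (Fin p)).ncard / n)} := by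
  have hn₀ : (0 : ℝ) < n := by exact_mod_cast hn
  set S := ({i | β i ≠ 0} : Set (Fin p)).toFinite.toFinset
  have hconst : 2 * (2 * c₁ * √n) / (c₂ * n) * √(#S : ℝ) =
      4 * c₁ / c₂ * √(({i | β i ≠ 0} : Set (Fin p)).ncard / n) := by
    rw [show ({i | β i ≠ 0} : Set (Fin p)).ncard = #S from Set.ncard_eq_toFinset_card _ _,
      Real.sqrt_div' _ hn₀.le]
    field_simp
    rw [Real.sq_sqrt hn₀.le]
    ring
  refine hH1.trans (measure_mono_ae ?_)
  filter_upwards [hβh] with ω ⟨hmem, hG⟩ hε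
  have hbasic : c₂ * n * ∑ i, (βh ω i - β i) ^ 2 ≤ 2 * c₁ * √n *
      (∑ i, |βh ω i - β i| - (∑ i, |βh ω i| - ∑ i, |β i|)) := by
    linarith [hH2 _ hmem, hε _ hmem]
  exact hconst ▸ sqrt_sum_sq_sub_le_of_support_subset (by simp [S]) (by positivity)
    (by positivity) hbasic

/-- Proposition 2.1: under (H1) and (H2), the ℓ₁-regularized estimator satisfies
`‖β̂ − β‖₂ ≤ (4c₁/c₂)√(|spt β|/n)` with probability at least `1 − c₀q`. -/
theorem stmt9 {Ω : Type*} [MeasurableSpace Ω] (ℙ : Measure Ω) [IsProbabilityMeasure ℙ]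
    {n p : ℕ} (hn : 1 ≤ n) (X : Matrix (Fin n) (Fin p) ℝ)
    (D : Set (Fin p → ℝ)) (β : Fin p → ℝ)
    (G : (Fin n → ℝ) → ℝ) (ψ φ : Fin n → ℝ → ℝ)
    (ε : Ω → Fin n → ℝ) (βh : Ω → Fin p → ℝ)
    (c₁ c₂ q c₀ : ℝ) (hc₁ : 0 < c₁) (hc₂ : 0 < c₂)
    (hq : 0 < q) (hq1 : q < 1) (hc₀ : 0 < c₀)
    (hH1 : ENNReal.ofReal (1 - c₀ * q) ≤
      ℙ {ω | ∀ v ∈ D,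
        |∑ k, ε ω k * (φ k (X.mulVec v k) - φ k (X.mulVec β k))| ≤
          c₁ * Real.sqrt n * ∑ i, |v i - β i|})
    (hH2 : ∀ v ∈ D, c₂ * n * (∑ i, (v i - β i) ^ 2) ≤
      G (fun k => ψ k (X.mulVec v k) - ψ k (X.mulVec β k)))
    (hβh : ∀ᵐ ω ∂ℙ, βh ω ∈ D ∧
      G (fun k => ψ k (X.mulVec (βh ω) k) - ψ k (X.mulVec β k)) ≤
        2 * |∑ k, ε ω k * (φ k (X.mulVec (βh ω) k) - φ k (X.mulVec β k))|
          - (2 * c₁ * Real.sqrt n) * ((∑ i, |βh ω i|) - ∑ i, |β i|)) :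
    ENNReal.ofReal (1 - c₀ * q) ≤
      ℙ {ω | Real.sqrt (∑ i, (βh ω i - β i) ^ 2) ≤
        (4 * c₁ / c₂) * Real.sqrt (({i | β i ≠ 0} : Set (Fin p)).ncard / n)} :=
  stmt9_general ℙ hn X D β G ψ φ ε βh c₁ c₂ q c₀ hc₁ hc₂ hH1 hH2 hβh
end
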